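/- (Genericity of the initial ideal under linear coordinate changes) Let K be an infinite field, σ a monomial order on P = K[x₁,…,xₙ], and I ⊆ P an ideal. Then there exist a monomial ideal J ⊆ P and a nonzero polynomial Δ in n² variables over K such that for every invertible n×n matrix g = (g_{ij}) over K with Δ(g) ≠ 0, the leading-term ideal LT_σ(φ_g(I)) equals J, where φ_g is the K-algebra automorphism of P determined by xⱼ ↦ Σᵢ g_{ij} xᵢ and φ_g(I) denotes the image ideal. In particular, the linear changes of coordinates g for which LT_σ(φ_g(I)) takes the common value J = gin_σ(I) contain a nonempty Zariski-open subset of the matrix space. -/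

import Mathlib

open MvPolynomial

/-- A monomial order on the exponent vectors `ν →₀ ℕ`: a linear order compatible with
addition and having `0` as least element. -/
structure MonomialOrd (ν : Type) where
  le : (ν →₀ ℕ) → (ν →₀ ℕ) → Prop
  le_refl : ∀ a, le a a
  le_trans : ∀ a b c, le a b → le b c → le a c
  le_antisymm : ∀ a b, le a b → le b a → a = b
  le_total : ∀ a b, le a b ∨ le b a
  add_le_add : ∀ a b c, le a b → le (a + c) (b + c)
  zero_le : ∀ a, le 0 a

/-- `a` is the σ-largest exponent vector in the support of `f`
(so `X^a` is the σ-leading monomial of `f`). -/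
def IsLeadingExp {K : Type} [Field K] {ν : Type} (σ : MonomialOrd ν)
    (f : MvPolynomial ν K) (a : ν →₀ ℕ) : Prop :=
  a ∈ f.support ∧ ∀ b ∈ f.support, σ.le b a

/-- The leading-term ideal `LT_σ(I)`: the ideal generated by the σ-leading monomials of the
nonzero elements of `I`. -/
noncomputable def ltIdeal {K : Type} [Field K] {ν : Type} (σ : MonomialOrd ν)
    (I : Ideal (MvPolynomial ν K)) : Ideal (MvPolynomial ν K) :=
  Ideal.span { m | ∃ f ∈ I, ∃ a, IsLeadingExp σ f a ∧ m = monomial a (1 : K) }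

/-- `G` is a σ-Gröbner basis of `I`: a finite subset of `I` whose σ-leading monomials
generate `LT_σ(I)`. -/
def IsGroebnerBasis {K : Type} [Field K] {ν : Type} (σ : MonomialOrd ν)
    (I : Ideal (MvPolynomial ν K)) (G : Finset (MvPolynomial ν K)) : Prop :=
  ↑G ⊆ (I : Set (MvPolynomial ν K)) ∧
    Ideal.span { m | ∃ g ∈ G, ∃ a, IsLeadingExp σ g a ∧ m = monomial a (1 : K) } = ltIdeal σ I

/-!
Substitute a matrix of indeterminates for `g`: `I` becomes an ideal `Ĩ` of `A[x]` with
`A = K[g_ij]`. By Dickson's lemma there are finitely many nonzero `G ∈ Ĩ` such that the leading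
exponent of every nonzero element of `Ĩ` lies above the leading exponent of one of them; `J` is
generated by their leading monomials and `Δ` is the product of their leading coefficients.
When `Δ(g) ≠ 0`, specializing at `g` keeps the leading exponents of these `G`. Any `F ∈ Ĩ` whose
leading coefficient vanishes at `g` can be pseudo-reduced by one of them, which lowers its leading
exponent while only multiplying its specialization by a nonzero scalar; by well-founded induction
every leading exponent of `φ_g(I)` therefore lies above one of the `G`.
-/

open scoped MonomialOrder

theorem exists_finset_subset_forall_exists_le {ι α : Type*} [PartialOrder α]
    [WellQuasiOrderedLE α] (f : ι → α) (s : Set ι) :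
    ∃ t : Finset ι, ↑t ⊆ s ∧ ∀ i ∈ s, ∃ j ∈ t, f j ≤ f i := by
  classical
  have hmin : {a | Minimal (· ∈ f '' s) a}.Finite :=
    WellQuasiOrderedLE.finite_of_isAntichain (setOfPred_minimal_antichain _)
  obtain ⟨t, hts, ht⟩ := Finset.subset_set_image_iff.1
    (show ↑hmin.toFinset ⊆ f '' s from fun a ha => (hmin.mem_toFinset.1 ha).prop)
  refine ⟨t, hts, fun i hi => ?_⟩
  obtain ⟨a, hai, ha⟩ :=
    (Set.isPWO_of_wellQuasiOrderedLE _).exists_le_minimal (Set.mem_image_of_mem f hi)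
  obtain ⟨j, hj, rfl⟩ := Finset.mem_image.1 (ht ▸ hmin.mem_toFinset.2 ha)
  exact ⟨j, hj, hai⟩

namespace MonomialOrd

variable {ν : Type} (σ : MonomialOrd ν)

theorem le_of_le {a b : ν →₀ ℕ} (h : a ≤ b) : σ.le a b := by
  obtain ⟨c, rfl⟩ := le_iff_exists_add.1 h
  simpa [add_comm] using σ.add_le_add 0 c a (σ.zero_le c)

/-- A type synonym, since `ν →₀ ℕ` already carries the pointwise order. -/
def Syn (_ : MonomialOrd ν) : Type := ν →₀ ℕ

noncomputable instance : AddCommMonoid σ.Syn := inferInstanceAs (AddCommMonoid (ν →₀ ℕ))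

noncomputable instance : LinearOrder σ.Syn where
  le := σ.le
  le_refl := σ.le_refl
  le_trans := σ.le_trans
  le_antisymm := σ.le_antisymm
  le_total := σ.le_total
  toDecidableLE := Classical.decRel _

instance : IsOrderedAddMonoid σ.Syn where
  add_le_add_left a b h c := σ.add_le_add a b c h

instance [Finite ν] : WellQuasiOrderedLE σ.Syn :=
  Monotone.wellQuasiOrderedLE_of_wellQuasiOrderedLE_of_surjective
    (f := (id : (ν →₀ ℕ) → σ.Syn)) (fun _ _ => σ.le_of_le) Function.surjective_id

noncomputable def toMonomialOrder [Finite ν] : MonomialOrder ν where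
  syn := σ.Syn
  toSyn := AddEquiv.refl _
  toSyn_monotone _ _ := σ.le_of_le

theorem isLeadingExp_iff [Finite ν] {K : Type} [Field K] {f : MvPolynomial ν K}
    {a : ν →₀ ℕ} : IsLeadingExp σ f a ↔ f ≠ 0 ∧ σ.toMonomialOrder.degree f = a := by
  constructor
  · rintro ⟨ha, hmax⟩
    have hf : f ≠ 0 := by rintro rfl; simp at ha
    exact ⟨hf, σ.le_antisymm _ _ (hmax _ (σ.toMonomialOrder.degree_mem_support hf))
      (σ.toMonomialOrder.le_degree ha)⟩
  · rintro ⟨hf, rfl⟩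
    exact ⟨σ.toMonomialOrder.degree_mem_support hf,
      fun b hb => σ.toMonomialOrder.le_degree hb⟩

end MonomialOrd

namespace MonomialOrder

variable {ν : Type*} {m : MonomialOrder ν} {A : Type*} [CommRing A]

variable (m) in
/-- Unlike `MonomialOrder.reduce`, this does not divide by `m.leadingCoeff g`: `f` is scaled by it
instead, so `g` need not have an invertible leading coefficient. -/
noncomputable def pseudoReduce (g f : MvPolynomial ν A) : MvPolynomial ν A :=
  C (m.leadingCoeff g) * f - monomial (m.degree f - m.degree g) (m.leadingCoeff f) * g

theorem pseudoReduce_mem {I : Ideal (MvPolynomial ν A)} {g f : MvPolynomial ν A} (hg : g ∈ I)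
    (hf : f ∈ I) : m.pseudoReduce g f ∈ I :=
  I.sub_mem (I.mul_mem_left _ hf) (I.mul_mem_left _ hg)

theorem degree_pseudoReduce_lt {g f : MvPolynomial ν A} (hgf : m.degree g ≤ m.degree f)
    (hne : m.pseudoReduce g f ≠ 0) : m.degree (m.pseudoReduce g f) ≺[m] m.degree f := by
  have hsplit : m.degree f - m.degree g + m.degree g = m.degree f := tsub_add_cancel_of_le hgf
  have hmul : (monomial (m.degree f - m.degree g) (m.leadingCoeff f) * g).coeff (m.degree f) =
      m.leadingCoeff f * m.leadingCoeff g := by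
    have h := coeff_monomial_mul (m.degree g) (m.degree f - m.degree g) (m.leadingCoeff f) g
    rwa [hsplit] at h
  have hcoeff : (m.pseudoReduce g f).coeff (m.degree f) = 0 := by
    rw [pseudoReduce, coeff_sub, coeff_C_mul, hmul, mul_comm]
    exact sub_self _
  have hle : m.degree (m.pseudoReduce g f) ≼[m] m.degree f := by
    refine le_trans degree_sub_le (sup_le ?_ ?_)
    · rw [C_mul']
      exact degree_smul_le
    · refine le_trans degree_mul_le ?_
      conv_rhs => rw [← hsplit]
      rw [map_add, map_add]
      exact add_le_add_left (degree_monomial_le _) _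
  refine lt_of_le_of_ne hle fun h => hne ?_
  rw [← m.toSyn.injective h] at hcoeff
  exact m.leadingCoeff_eq_zero_iff.1 hcoeff

variable {K : Type*} [CommRing K] (ev : A →+* K)

theorem map_pseudoReduce {g f : MvPolynomial ν A} (hf : ev (m.leadingCoeff f) = 0) :
    map ev (m.pseudoReduce g f) = C (ev (m.leadingCoeff g)) * map ev f := by
  simp [pseudoReduce, map_monomial, hf]

theorem degree_map_of_leadingCoeff_ne_zero {f : MvPolynomial ν A}
    (hf : ev (m.leadingCoeff f) ≠ 0) : m.degree (map ev f) = m.degree f := by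
  have hmem : m.degree f ∈ (map ev f).support := by rwa [mem_support_iff, coeff_map]
  apply m.toSyn.injective
  exact le_antisymm (degree_le_iff.2 fun c hc => le_degree (support_map_subset _ _ hc))
    (le_degree hmem)

variable [NoZeroDivisors K] {ev}

theorem exists_degree_le_degree_map {I : Ideal (MvPolynomial ν A)}
    {S : Finset (MvPolynomial ν A)} (hSI : ↑S ⊆ (I : Set (MvPolynomial ν A)))
    (hS : ∀ F ∈ I, F ≠ 0 → ∃ G ∈ S, m.degree G ≤ m.degree F)
    (hev : ∀ G ∈ S, ev (m.leadingCoeff G) ≠ 0) {F : MvPolynomial ν A} (hF : F ∈ I)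
    (hF0 : map ev F ≠ 0) : ∃ G ∈ S, m.degree G ≤ m.degree (map ev F) := by
  induction hd : m.toSyn (m.degree F) using WellFoundedLT.induction generalizing F with
  | _ d IH =>
  obtain ⟨G, hGS, hGF⟩ := hS F hF (by rintro rfl; simp at hF0)
  by_cases hlc : ev (m.leadingCoeff F) = 0
  · have hmap := map_pseudoReduce (g := G) ev hlc
    have hG0 : (C (ev (m.leadingCoeff G)) : MvPolynomial ν K) ≠ 0 := C_ne_zero.2 (hev G hGS)
    have hF'0 : map ev (m.pseudoReduce G F) ≠ 0 := by
      rw [hmap]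
      exact mul_ne_zero hG0 hF0
    have hlt := degree_pseudoReduce_lt hGF fun h => hF'0 (by rw [h, map_zero])
    obtain ⟨G', hG'S, hG'⟩ := IH _ (hd ▸ hlt) (pseudoReduce_mem (hSI hGS) hF) hF'0 rfl
    refine ⟨G', hG'S, ?_⟩
    rwa [hmap, degree_mul hG0 hF0, degree_C, zero_add] at hG'
  · exact ⟨G, hGS, by rwa [degree_map_of_leadingCoeff_ne_zero ev hlc]⟩

end MonomialOrder

theorem MonomialOrd.ltIdeal_map_eq_span {ν : Type} [Finite ν] (σ : MonomialOrd ν) {A : Type*}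
    {K : Type} [CommRing A] [Field K] {ev : A →+* K} (hsurj : Function.Surjective ev)
    {I : Ideal (MvPolynomial ν A)} {S : Finset (MvPolynomial ν A)}
    (hSI : ↑S ⊆ (I : Set (MvPolynomial ν A)))
    (hS : ∀ F ∈ I, F ≠ 0 → ∃ G ∈ S, σ.toMonomialOrder.degree G ≤ σ.toMonomialOrder.degree F)
    (hev : ∀ G ∈ S, ev (σ.toMonomialOrder.leadingCoeff G) ≠ 0) :
    ltIdeal σ (I.map (map ev)) = Ideal.span ((fun a => monomial a (1 : K)) ''
      (σ.toMonomialOrder.degree '' (S : Set (MvPolynomial ν A)))) := by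
  apply _root_.le_antisymm
  · rw [ltIdeal, Ideal.span_le]
    rintro _ ⟨f, hf, a, ha, rfl⟩
    obtain ⟨F, hF, rfl⟩ := (Ideal.mem_map_iff_of_surjective _ (map_surjective _ hsurj)).1 hf
    obtain ⟨hF0, rfl⟩ := σ.isLeadingExp_iff.1 ha
    obtain ⟨G, hGS, hGF⟩ := MonomialOrder.exists_degree_le_degree_map hSI hS hev hF hF0
    rw [SetLike.mem_coe, mem_ideal_span_monomial_image]
    intro b hb
    exact ⟨_, ⟨G, hGS, rfl⟩, Finset.mem_singleton.1 (support_monomial_subset hb) ▸ hGF⟩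
  · rw [Ideal.span_le]
    rintro _ ⟨_, ⟨G, hGS, rfl⟩, rfl⟩
    refine Ideal.subset_span ⟨map ev G, Ideal.mem_map_of_mem _ (hSI hGS), _, ?_, rfl⟩
    refine σ.isLeadingExp_iff.2 ⟨fun h => hev G hGS ?_,
      MonomialOrder.degree_map_of_leadingCoeff_ne_zero ev (hev G hGS)⟩
    rw [MonomialOrder.leadingCoeff, ← coeff_map, h, coeff_zero]

noncomputable def genericLinearChange (ν K : Type*) [Fintype ν] [CommSemiring K] :
    MvPolynomial ν K →ₐ[K] MvPolynomial ν (MvPolynomial (ν × ν) K) :=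
  aeval fun j => ∑ i, C (X (i, j)) * X i

theorem map_eval_comp_genericLinearChange {ν K : Type*} [Fintype ν] [CommSemiring K]
    (g : Matrix ν ν K) :
    (map (eval fun q : ν × ν => g q.1 q.2)).comp (genericLinearChange ν K : _ →+* _) =
      ((aeval fun j => ∑ i, C (g i j) * X i : MvPolynomial ν K →ₐ[K] MvPolynomial ν K) :
        MvPolynomial ν K →+* MvPolynomial ν K) := by
  ext <;> simp [genericLinearChange]

theorem generic_initial_ideal_general {K : Type} [Field K] {n : ℕ}
    (σ : MonomialOrd (Fin n)) (I : Ideal (MvPolynomial (Fin n) K)) :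
    ∃ (J : Ideal (MvPolynomial (Fin n) K)) (Δ : MvPolynomial (Fin n × Fin n) K),
      (∃ S : Set (Fin n →₀ ℕ), J = Ideal.span ((fun a => monomial a (1 : K)) '' S)) ∧
      Δ ≠ 0 ∧
      ∀ g : Matrix (Fin n) (Fin n) K, IsUnit g.det →
        MvPolynomial.eval (fun q : Fin n × Fin n => g q.1 q.2) Δ ≠ 0 →
        ltIdeal σ
          (Ideal.map
            (MvPolynomial.aeval (R := K)
              (fun j : Fin n => ∑ i : Fin n, C (g i j) * X i) :
              MvPolynomial (Fin n) K →ₐ[K] MvPolynomial (Fin n) K)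
            I) = J := by
  set m := σ.toMonomialOrder
  obtain ⟨S, hS, hSmin⟩ := exists_finset_subset_forall_exists_le m.degree
    {F | F ∈ I.map (genericLinearChange (Fin n) K) ∧ F ≠ 0}
  refine ⟨Ideal.span ((fun a => monomial a 1) ''
      (m.degree '' (S : Set (MvPolynomial (Fin n) (MvPolynomial (Fin n × Fin n) K))))),
    ∏ G ∈ S, m.leadingCoeff G, ⟨_, rfl⟩, ?_, fun g _ hΔ => ?_⟩
  · exact Finset.prod_ne_zero_iff.2 fun G hG => m.leadingCoeff_ne_zero_iff.2 (hS hG).2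
  have hlc : ∀ G ∈ S, eval (fun q : Fin n × Fin n => g q.1 q.2) (m.leadingCoeff G) ≠ 0 :=
    fun G hG h => hΔ (by rw [map_prod]; exact Finset.prod_eq_zero hG h)
  rw [← Ideal.map_coe, ← map_eval_comp_genericLinearChange, ← Ideal.map_map, Ideal.map_coe]
  exact σ.ltIdeal_map_eq_span (fun k => ⟨C k, eval_C k⟩) (fun G hG => (hS hG).1)
    (fun F hF hF0 => hSmin F ⟨hF, hF0⟩) hlc

/-- genericity of the initial ideal under linear coordinate changes: over an
infinite field, there are a monomial ideal `J` and a nonzero polynomial `Δ` in the `n²`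
matrix entries such that for every invertible matrix `g` with `Δ(g) ≠ 0`, the leading-term
ideal of the transformed ideal `φ_g(I)` equals `J` (the generic initial ideal `gin_σ(I)`).
Here `φ_g` is the `K`-algebra map determined by `xⱼ ↦ Σᵢ g_{ij} xᵢ`. -/
theorem generic_initial_ideal {K : Type} [Field K] [Infinite K] {n : ℕ}
    (σ : MonomialOrd (Fin n)) (I : Ideal (MvPolynomial (Fin n) K)) :
    ∃ (J : Ideal (MvPolynomial (Fin n) K)) (Δ : MvPolynomial (Fin n × Fin n) K),
      (∃ S : Set (Fin n →₀ ℕ), J = Ideal.span ((fun a => monomial a (1 : K)) '' S)) ∧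
      Δ ≠ 0 ∧
      ∀ g : Matrix (Fin n) (Fin n) K, IsUnit g.det →
        MvPolynomial.eval (fun q : Fin n × Fin n => g q.1 q.2) Δ ≠ 0 →
        ltIdeal σ
          (Ideal.map
            (MvPolynomial.aeval (R := K)
              (fun j : Fin n => ∑ i : Fin n, C (g i j) * X i) :
              MvPolynomial (Fin n) K →ₐ[K] MvPolynomial (Fin n) K)
            I) = J :=
  generic_initial_ideal_general σ I
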